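/- Let b₀ > 0, and for each n let η_n = η / sqrt(b₀² + ∑_{k=1}^{n-1} ‖g_k‖²) where g_k are random vectors satisfying E[∑_{k=1}^{n-1} ‖g_k - G_k‖²] ≤ (n-1)σ² and ‖G_k‖² ≤ 2M δ_k with δ_k ≥ 0. Then E[1/η_n] ≤ (1/η)( sqrt(b₀² + 2(n-1)σ²) + 2 sqrt(M) E[sqrt(∑_{k=1}^{n} δ_k)] ). -/

import Mathlib

/-! Pointwise, `‖g_k‖² ≤ 2‖g_k - G_k‖² + 2‖G_k‖² ≤ 2‖g_k - G_k‖² + 4Mδ_k`, so the radicand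
`b₀² + ∑ ‖g_k‖²` is at most `X + 4M ∑ δ_k` with `X = b₀² + 2 ∑ ‖g_k - G_k‖²`. Subadditivity of
`√` splits off `2√M √(∑ δ_k)`, and Jensen's inequality for the concave `√` gives
`E[√X] ≤ √(E[X]) ≤ √(b₀² + 2(n-1)σ²)`. -/

open MeasureTheory Finset

lemma Real.sqrt_add_le_sqrt_add_sqrt {a b : ℝ} (ha : 0 ≤ a) (hb : 0 ≤ b) :
    √(a + b) ≤ √a + √b := by
  simpa only [Real.sqrt_eq_rpow] using
    Real.rpow_add_le_add_rpow ha hb (by norm_num) (by norm_num : (1 / 2 : ℝ) ≤ 1)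

lemma norm_sq_le_two_mul_norm_sub_sq_add {E : Type*} [SeminormedAddCommGroup E] (x y : E) :
    ‖x‖ ^ 2 ≤ 2 * ‖x - y‖ ^ 2 + 2 * ‖y‖ ^ 2 :=
  calc ‖x‖ ^ 2 ≤ (‖x - y‖ + ‖y‖) ^ 2 := by
        gcongr; linarith [norm_le_norm_add_norm_sub' x y]
    _ ≤ 2 * ‖x - y‖ ^ 2 + 2 * ‖y‖ ^ 2 := by linarith [add_sq_le (a := ‖x - y‖) (b := ‖y‖)]

section Integral

variable {Ω : Type*} [MeasurableSpace Ω] {μ : Measure Ω} {X : Ω → ℝ}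

lemma MeasureTheory.Integrable.sqrt [IsFiniteMeasure μ] (hX : Integrable X μ) :
    Integrable (fun ω => √(X ω)) μ := by
  refine (hX.abs.add (integrable_const 1)).mono'
    (Real.continuous_sqrt.comp_aestronglyMeasurable hX.aestronglyMeasurable) ?_
  filter_upwards with ω
  rw [Real.norm_eq_abs, abs_of_nonneg (Real.sqrt_nonneg _)]
  show √(X ω) ≤ |X ω| + 1
  exact Real.sqrt_le_iff.mpr
    ⟨by positivity, by nlinarith [le_abs_self (X ω), abs_nonneg (X ω)]⟩

lemma integral_sqrt_le_sqrt_integral [IsProbabilityMeasure μ] (hX0 : ∀ᵐ ω ∂μ, 0 ≤ X ω)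
    (hX : Integrable X μ) : ∫ ω, √(X ω) ∂μ ≤ √(∫ ω, X ω ∂μ) :=
  Real.strictConcaveOn_sqrt.concaveOn.le_map_integral Real.continuous_sqrt.continuousOn
    isClosed_Ici hX0 hX hX.sqrt

end Integral

lemma sqrt_add_sum_norm_sq_le {ι E : Type*} [SeminormedAddCommGroup E] {s t : Finset ι}
    (hst : s ⊆ t) (g G : ι → E) {δ : ι → ℝ} {M b : ℝ} (hb : 0 ≤ b) (hδ : ∀ k, 0 ≤ δ k)
    (hG : ∀ k, ‖G k‖ ^ 2 ≤ 2 * M * δ k) :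
    √(b + ∑ k ∈ s, ‖g k‖ ^ 2)
      ≤ √(b + 2 * ∑ k ∈ s, ‖g k - G k‖ ^ 2) + 2 * √M * √(∑ k ∈ t, δ k) := by
  have hMδ : ∀ k, 0 ≤ 4 * M * δ k := fun k => by nlinarith [hG k, sq_nonneg ‖G k‖]
  have hradicand : b + ∑ k ∈ s, ‖g k‖ ^ 2
      ≤ (b + 2 * ∑ k ∈ s, ‖g k - G k‖ ^ 2) + ∑ k ∈ t, 4 * M * δ k :=
    calc b + ∑ k ∈ s, ‖g k‖ ^ 2
        ≤ b + ∑ k ∈ s, (2 * ‖g k - G k‖ ^ 2 + 4 * M * δ k) := by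
          gcongr with k
          linarith [norm_sq_le_two_mul_norm_sub_sq_add (g k) (G k), hG k]
      _ ≤ b + ∑ k ∈ s, 2 * ‖g k - G k‖ ^ 2 + ∑ k ∈ t, 4 * M * δ k := by
          rw [sum_add_distrib, ← add_assoc]
          gcongr
          exact fun k _ _ => hMδ k
      _ = _ := by rw [← mul_sum]
  have hsqrt_split : √(∑ k ∈ t, 4 * M * δ k) = 2 * √M * √(∑ k ∈ t, δ k) := by
    rw [← mul_sum, Real.sqrt_mul' _ (sum_nonneg fun k _ => hδ k),
      Real.sqrt_mul (by norm_num), show (4 : ℝ) = 2 ^ 2 by norm_num, Real.sqrt_sq (by norm_num)]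
  calc √(b + ∑ k ∈ s, ‖g k‖ ^ 2)
      ≤ √((b + 2 * ∑ k ∈ s, ‖g k - G k‖ ^ 2) + ∑ k ∈ t, 4 * M * δ k) :=
        Real.sqrt_le_sqrt hradicand
    _ ≤ √(b + 2 * ∑ k ∈ s, ‖g k - G k‖ ^ 2) + √(∑ k ∈ t, 4 * M * δ k) :=
        Real.sqrt_add_le_sqrt_add_sqrt (by positivity) (sum_nonneg fun k _ => hMδ k)
    _ = _ := by rw [hsqrt_split]

open MeasureTheory in
theorem stmt_13_general
    {Ω : Type*} [MeasurableSpace Ω] (μ : Measure Ω) [IsProbabilityMeasure μ]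
    {H : Type*} [NormedAddCommGroup H] [InnerProductSpace ℝ H]
    (g G : ℕ → Ω → H) (δ : ℕ → Ω → ℝ)
    (η b0 M σ2 : ℝ) (hη : 0 < η)
    (n : ℕ)
    (hδ0 : ∀ k ω, 0 ≤ δ k ω)
    (hvarint : Integrable (fun ω => ∑ k ∈ Finset.range (n - 1), ‖g k ω - G k ω‖ ^ 2) μ)
    (hvar : ∫ ω, (∑ k ∈ Finset.range (n - 1), ‖g k ω - G k ω‖ ^ 2) ∂μ
      ≤ (n - 1 : ℝ) * σ2)
    (hG : ∀ k ω, ‖G k ω‖ ^ 2 ≤ 2 * M * δ k ω)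
    (hint1 : Integrable
      (fun ω => (1 / η) * Real.sqrt (b0 ^ 2 + ∑ k ∈ Finset.range (n - 1), ‖g k ω‖ ^ 2)) μ)
    (hint2 : Integrable (fun ω => Real.sqrt (∑ k ∈ Finset.range n, δ k ω)) μ) :
    ∫ ω, (1 / η) * Real.sqrt (b0 ^ 2 + ∑ k ∈ Finset.range (n - 1), ‖g k ω‖ ^ 2) ∂μ
      ≤ (1 / η) * (Real.sqrt (b0 ^ 2 + 2 * (n - 1 : ℝ) * σ2)
          + 2 * Real.sqrt M * ∫ ω, Real.sqrt (∑ k ∈ Finset.range n, δ k ω) ∂μ) := by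
  set X : Ω → ℝ := fun ω => b0 ^ 2 + 2 * ∑ k ∈ range (n - 1), ‖g k ω - G k ω‖ ^ 2
  have hX : Integrable X μ := (integrable_const _).add (hvarint.const_mul 2)
  have hEX : ∫ ω, X ω ∂μ ≤ b0 ^ 2 + 2 * (n - 1 : ℝ) * σ2 := by
    rw [integral_add (integrable_const _) (hvarint.const_mul 2), integral_const,
      integral_const_mul]
    simp only [probReal_univ, one_smul]
    linarith
  have hjensen : ∫ ω, √(X ω) ∂μ ≤ √(b0 ^ 2 + 2 * (n - 1 : ℝ) * σ2) :=
    (integral_sqrt_le_sqrt_integral (ae_of_all _ fun ω => by positivity) hX).trans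
      (Real.sqrt_le_sqrt hEX)
  have hpointwise : ∀ ω, (1 / η) * √(b0 ^ 2 + ∑ k ∈ range (n - 1), ‖g k ω‖ ^ 2)
      ≤ (1 / η) * (√(X ω) + 2 * √M * √(∑ k ∈ range n, δ k ω)) := fun ω => by
    gcongr
    exact sqrt_add_sum_norm_sq_le (range_subset_range.2 (n.sub_le 1)) _ _ (sq_nonneg b0)
      (hδ0 · ω) (hG · ω)
  calc _ ≤ ∫ ω, (1 / η) * (√(X ω) + 2 * √M * √(∑ k ∈ range n, δ k ω)) ∂μ :=
        integral_mono hint1 ((hX.sqrt.add (hint2.const_mul _)).const_mul _) hpointwise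
    _ = (1 / η) * (∫ ω, √(X ω) ∂μ + 2 * √M * ∫ ω, √(∑ k ∈ range n, δ k ω) ∂μ) := by
        rw [integral_const_mul, integral_add hX.sqrt (hint2.const_mul _), integral_const_mul]
    _ ≤ _ := by gcongr

open MeasureTheory in
/-- Bound on the expected reciprocal AdaGrad step size (inequality (23)):
`E[1/η_n] ≤ (1/η)(√(b₀² + 2(n-1)σ²) + 2√M E[√(∑_{k=1}^n δ_k)])`. -/
theorem stmt_13
    {Ω : Type*} [MeasurableSpace Ω] (μ : Measure Ω) [IsProbabilityMeasure μ]
    {H : Type*} [NormedAddCommGroup H] [InnerProductSpace ℝ H]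
    (g G : ℕ → Ω → H) (δ : ℕ → Ω → ℝ)
    (η b0 M σ2 : ℝ) (hη : 0 < η) (hb0 : 0 < b0) (hM : 0 < M) (hσ2 : 0 < σ2)
    (n : ℕ) (hn : 1 ≤ n)
    (hδ0 : ∀ k ω, 0 ≤ δ k ω)
    (hvarint : Integrable (fun ω => ∑ k ∈ Finset.range (n - 1), ‖g k ω - G k ω‖ ^ 2) μ)
    (hvar : ∫ ω, (∑ k ∈ Finset.range (n - 1), ‖g k ω - G k ω‖ ^ 2) ∂μ
      ≤ (n - 1 : ℝ) * σ2)
    (hG : ∀ k ω, ‖G k ω‖ ^ 2 ≤ 2 * M * δ k ω)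
    (hint1 : Integrable
      (fun ω => (1 / η) * Real.sqrt (b0 ^ 2 + ∑ k ∈ Finset.range (n - 1), ‖g k ω‖ ^ 2)) μ)
    (hint2 : Integrable (fun ω => Real.sqrt (∑ k ∈ Finset.range n, δ k ω)) μ) :
    ∫ ω, (1 / η) * Real.sqrt (b0 ^ 2 + ∑ k ∈ Finset.range (n - 1), ‖g k ω‖ ^ 2) ∂μ
      ≤ (1 / η) * (Real.sqrt (b0 ^ 2 + 2 * (n - 1 : ℝ) * σ2)
          + 2 * Real.sqrt M * ∫ ω, Real.sqrt (∑ k ∈ Finset.range n, δ k ω) ∂μ) :=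
  stmt_13_general μ g G δ η b0 M σ2 hη n hδ0 hvarint hvar hG hint1 hint2
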